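/- For every d ≥ 1 and all d×d complex (or real) matrices Σ, M, N, the bilinear operator ddexp_Σ is symmetric: ddexp_Σ(M,N) = ddexp_Σ(N,M), where ddexp_Σ(N,M) := dexp_Σ(M) dexp_Σ(N) + ∫_0^1 τ [dexp_{τΣ}(N), e^{τΣ} M e^{−τΣ}] dτ. -/

import Mathlib

noncomputable section

attribute [local instance] Matrix.normedAddCommGroup Matrix.normedSpace

/-- `d × d` complex matrices. -/
abbrev Mat (d : ℕ) := Matrix (Fin d) (Fin d) ℂ

/-- Iterated adjoint operator. -/
def adPow {d : ℕ} (S : Mat d) : ℕ → Mat d → Mat d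
  | 0, M => M
  | n + 1, M => S * adPow S n M - adPow S n M * S

/-- `dexp_Σ(M) = ∑_{n≥0} ad_Σ^n(M)/(n+1)!`. -/
def dexp {d : ℕ} (S M : Mat d) : Mat d :=
  ∑' n : ℕ, (((n + 1).factorial : ℂ))⁻¹ • adPow S n M

/-- The Lie commutator `[A, B] = AB − BA`. -/
def lieComm {d : ℕ} (A B : Mat d) : Mat d := A * B - B * A

/-- `ddexp_Σ(N, M) = dexp_Σ(M) dexp_Σ(N) + ∫_0^1 τ [dexp_{τΣ}(N), e^{τΣ} M e^{−τΣ}] dτ`. -/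
def ddexp {d : ℕ} (S N M : Mat d) : Mat d :=
  dexp S M * dexp S N +
    ∫ τ in (0:ℝ)..1,
      τ • lieComm (dexp (τ • S) N)
        (NormedSpace.exp (τ • S) * M * NormedSpace.exp (-(τ • S)))

/-!
Put `F_M(t) = t • dexp_{tΣ}(M)` and `f_M(t) = e^{tΣ} M e^{-tΣ}`. Conjugation by `e^{tΣ}` is
`e^{t ad_Σ}`, so both are power series in `t` with coefficients `ad_Σ^n(M)`, and termwise
differentiation gives `F_M' = f_M`. Since `F_M(0) = 0` and `F_M(1) = dexp_Σ(M)`, integrating the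
derivative `[F_M, f_N] + [f_M, F_N]` of `[F_M, F_N]` over `[0, 1]` yields
`∫ τ [dexp_{τΣ}(M), f_N] - ∫ τ [dexp_{τΣ}(N), f_M] = [dexp_Σ(M), dexp_Σ(N)]`,
which is the difference of the two sides.
-/

open NormedSpace
open scoped Nat

section PowerSeries

variable {E : Type*} [NormedAddCommGroup E] [NormedSpace ℝ E] [CompleteSpace E]

theorem hasDerivAt_tsum_pow_succ_div_factorial_smul {v : ℕ → E} {C K : ℝ}
    (hv : ∀ n, ‖v n‖ ≤ C * K ^ n) (t : ℝ) :
    HasDerivAt (fun s : ℝ => ∑' n, (s ^ (n + 1) / (n + 1)! : ℝ) • v n)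
      (∑' n, (t ^ n / n ! : ℝ) • v n) t := by
  set R := |t| + 1
  have hterm (n : ℕ) (s : ℝ) : HasDerivAt (fun u : ℝ => (u ^ (n + 1) / (n + 1)! : ℝ) • v n)
      ((s ^ n / n ! : ℝ) • v n) s := by
    convert ((hasDerivAt_pow (n + 1) s).div_const ((n + 1)! : ℝ)).smul_const (v n) using 2
    rw [Nat.factorial_succ]
    push_cast
    field_simp
  have hbound (n : ℕ) (s : ℝ) (hs : s ∈ Metric.ball 0 R) :
      ‖(s ^ n / n ! : ℝ) • v n‖ ≤ C * ((R * K) ^ n / n !) := by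
    have hsR : |s| ≤ R := (by simpa using hs : |s| < R).le
    calc ‖(s ^ n / n ! : ℝ) • v n‖ = |s| ^ n / n ! * ‖v n‖ := by
          rw [norm_smul, norm_div, norm_pow, Real.norm_eq_abs, RCLike.norm_natCast]
      _ ≤ R ^ n / n ! * (C * K ^ n) := by gcongr; exact hv n
      _ = C * ((R * K) ^ n / n !) := by rw [mul_pow]; ring
  exact hasDerivAt_tsum_of_isPreconnected ((Real.summable_pow_div_factorial (R * K)).mul_left C)
    Metric.isOpen_ball (convex_ball 0 R).isPreconnected (fun n s _ => hterm n s) hbound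
    (Metric.mem_ball_self (by positivity)) (by simp) (by simp [R])

end PowerSeries

theorem hasSum_exp_series_apply {𝕂 V : Type*} [RCLike 𝕂] [NormedAddCommGroup V]
    [NormedSpace 𝕂 V] [CompleteSpace V] (T : V →L[𝕂] V) (v : V) :
    HasSum (fun n => (n !⁻¹ : 𝕂) • (T ^ n) v) (exp T v) := by
  simpa only [ContinuousLinearMap.apply_apply, smul_apply] using
    (exp_series_hasSum_exp' (𝕂 := 𝕂) T).mapL (ContinuousLinearMap.apply 𝕂 V v)

section Matrices

variable {d : ℕ}

theorem adPow_smul (S M : Mat d) (t : ℝ) (n : ℕ) :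
    adPow (t • S) n M = t ^ n • adPow S n M := by
  induction n with
  | zero => simp [adPow]
  | succ n ih =>
    rw [adPow, ih, adPow, smul_mul_smul_comm, smul_mul_smul_comm, ← pow_succ', ← pow_succ, smul_sub]

theorem smul_dexp_smul_eq_tsum (S M : Mat d) (t : ℝ) :
    t • dexp (t • S) M = ∑' n, (t ^ (n + 1) / (n + 1)! : ℝ) • adPow S n M := by
  rw [dexp, ← tsum_const_smul'']
  refine tsum_congr fun n => ?_
  rw [adPow_smul, inv_natCast_smul_eq ℂ ℝ, smul_smul, smul_smul]
  congr 1
  ring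

section OperatorNorm

/- The uniformity of `Matrix.normedAddCommGroup` is only propositionally equal to the one `Matrix`
carries by default, from which `Mat d →L[ℂ] Mat d` is built; until the two are aligned, the
operator norm on that type is not found. -/
@[reducible] def matNormedAddCommGroup (d : ℕ) : NormedAddCommGroup (Mat d) :=
  { (Matrix.normedAddCommGroup : NormedAddCommGroup (Mat d)) with
    toMetricSpace :=
      (Matrix.normedAddCommGroup : NormedAddCommGroup (Mat d)).toMetricSpace.replaceUniformity rfl }

attribute [local instance] matNormedAddCommGroup

@[reducible] def matNormedSpace (d : ℕ) : NormedSpace ℂ (Mat d) :=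
  { norm_smul_le := (Matrix.normedSpace : NormedSpace ℂ (Mat d)).norm_smul_le }

attribute [local instance] matNormedSpace

def mulLeftCLM (X : Mat d) : Mat d →L[ℂ] Mat d :=
  LinearMap.toContinuousLinearMap (LinearMap.mulLeft ℂ X)

def mulRightCLM (X : Mat d) : Mat d →L[ℂ] Mat d :=
  LinearMap.toContinuousLinearMap (LinearMap.mulRight ℂ X)

def adCLM (X : Mat d) : Mat d →L[ℂ] Mat d := mulLeftCLM X - mulRightCLM X

@[simp] theorem mulLeftCLM_apply (X A : Mat d) : mulLeftCLM X A = X * A := rfl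

@[simp] theorem mulRightCLM_apply (X A : Mat d) : mulRightCLM X A = A * X := rfl

theorem adCLM_apply (X A : Mat d) : adCLM X A = lieComm X A := rfl

theorem mulLeftCLM_pow_apply (X A : Mat d) (n : ℕ) : (mulLeftCLM X ^ n) A = X ^ n * A := by
  induction n with
  | zero => simp
  | succ n ih => rw [pow_succ', mul_apply_eq_comp, ih, mulLeftCLM_apply, ← mul_assoc, ← pow_succ']

theorem mulRightCLM_pow_apply (X A : Mat d) (n : ℕ) : (mulRightCLM X ^ n) A = A * X ^ n := by
  induction n with
  | zero => simp
  | succ n ih => rw [pow_succ', mul_apply_eq_comp, ih, mulRightCLM_apply, mul_assoc, ← pow_succ]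

theorem adCLM_pow_apply (X A : Mat d) (n : ℕ) : (adCLM X ^ n) A = adPow X n A := by
  induction n with
  | zero => rfl
  | succ n ih => rw [pow_succ', mul_apply_eq_comp, ih]; rfl

-- The sup norm is not submultiplicative, so summability is borrowed from the operator algebra.
theorem hasSum_exp_series_mat (X : Mat d) : HasSum (fun n => (n !⁻¹ : ℂ) • X ^ n) (exp X) := by
  have hs : Summable fun n => (n !⁻¹ : ℂ) • X ^ n := by
    simpa only [mulLeftCLM_pow_apply, mul_one] using
      (hasSum_exp_series_apply (mulLeftCLM X) 1).summable
  rw [exp_eq_tsum ℂ]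
  exact hs.hasSum

theorem exp_mulLeftCLM_apply (X A : Mat d) : exp (mulLeftCLM X) A = exp X * A :=
  (hasSum_exp_series_apply (mulLeftCLM X) A).unique <| by
    simpa only [mulLeftCLM_pow_apply, smul_mul_assoc] using (hasSum_exp_series_mat X).mul_right A

theorem exp_mulRightCLM_apply (X A : Mat d) : exp (mulRightCLM X) A = A * exp X :=
  (hasSum_exp_series_apply (mulRightCLM X) A).unique <| by
    simpa only [mulRightCLM_pow_apply, mul_smul_comm] using (hasSum_exp_series_mat X).mul_left A

theorem exp_adCLM_apply (X A : Mat d) : exp (adCLM X) A = exp X * A * exp (-X) := by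
  let +nondep : NormedAlgebra ℚ (Mat d →L[ℂ] Mat d) := .restrictScalars ℚ ℂ _
  have hcomm : Commute (mulLeftCLM X) (mulRightCLM (-X)) := by ext; simp [mul_assoc]
  have hsplit : adCLM X = mulLeftCLM X + mulRightCLM (-X) := by
    ext; simp [adCLM, sub_eq_add_neg]
  rw [hsplit, exp_add_of_commute hcomm, mul_apply_eq_comp, exp_mulRightCLM_apply,
    exp_mulLeftCLM_apply, mul_assoc]

theorem norm_adPow_le (S M : Mat d) (n : ℕ) : ‖adPow S n M‖ ≤ ‖M‖ * ‖adCLM S‖ ^ n := by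
  induction n with
  | zero => simp [adPow]
  | succ n ih =>
    calc ‖adPow S (n + 1) M‖ = ‖adCLM S (adPow S n M)‖ := rfl
      _ ≤ ‖adCLM S‖ * (‖M‖ * ‖adCLM S‖ ^ n) := (adCLM S).le_of_opNorm_le_of_le le_rfl ih
      _ = ‖M‖ * ‖adCLM S‖ ^ (n + 1) := by ring

theorem exp_smul_mul_mul_exp_neg_eq_tsum (S M : Mat d) (t : ℝ) :
    exp (t • S) * M * exp (-(t • S)) = ∑' n, (t ^ n / n ! : ℝ) • adPow S n M := by
  rw [← exp_adCLM_apply, ← (hasSum_exp_series_apply _ M).tsum_eq]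
  refine tsum_congr fun n => ?_
  rw [adCLM_pow_apply, adPow_smul, inv_natCast_smul_eq ℂ ℝ, smul_smul, div_eq_inv_mul]

theorem continuous_exp_smul_mul_mul_exp_neg (S M : Mat d) :
    Continuous fun t : ℝ => exp (t • S) * M * exp (-(t • S)) := by
  let +nondep : NormedAlgebra ℚ (Mat d →L[ℂ] Mat d) := .restrictScalars ℚ ℂ _
  have hsmul (t : ℝ) : adCLM (t • S) = t • adCLM S := by
    ext; simp [adCLM_apply, lieComm, smul_sub]
  simp only [← exp_adCLM_apply, hsmul]
  fun_prop

end OperatorNorm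

theorem hasDerivAt_smul_dexp_smul (S M : Mat d) (t : ℝ) :
    HasDerivAt (fun s : ℝ => s • dexp (s • S) M) (exp (t • S) * M * exp (-(t • S))) t := by
  simp only [smul_dexp_smul_eq_tsum, exp_smul_mul_mul_exp_neg_eq_tsum]
  exact hasDerivAt_tsum_pow_succ_div_factorial_smul (norm_adPow_le S M) t

theorem HasDerivAt.lieComm {u v : ℝ → Mat d} {u' v' : Mat d} {t : ℝ}
    (hu : HasDerivAt u u' t) (hv : HasDerivAt v v' t) :
    HasDerivAt (fun s => _root_.lieComm (u s) (v s))
      (_root_.lieComm (u t) v' + _root_.lieComm u' (v t)) t :=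
  (LinearMap.mul ℝ (Mat d) - (LinearMap.mul ℝ (Mat d)).flip).toContinuousBilinearMap
    |>.hasDerivAt_of_bilinear (fun _ => hu) (fun _ => hv)

theorem Continuous.lieComm {u v : ℝ → Mat d} (hu : Continuous u) (hv : Continuous v) :
    Continuous fun s => _root_.lieComm (u s) (v s) :=
  (hu.matrix_mul hv).sub (hv.matrix_mul hu)

theorem smul_lieComm (r : ℝ) (A B : Mat d) : r • lieComm A B = lieComm (r • A) B := by
  simp only [lieComm, smul_sub, smul_mul_assoc, mul_smul_comm]

theorem integral_lieComm_sub_integral_lieComm {F G f g : ℝ → Mat d}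
    (hF : ∀ t, HasDerivAt F (f t) t) (hG : ∀ t, HasDerivAt G (g t) t)
    (hf : Continuous f) (hg : Continuous g) (a b : ℝ) :
    (∫ t in a..b, lieComm (F t) (g t)) - ∫ t in a..b, lieComm (G t) (f t) =
      lieComm (F b) (G b) - lieComm (F a) (G a) := by
  have hFc : Continuous F := continuous_iff_continuousAt.2 fun t => (hF t).continuousAt
  have hGc : Continuous G := continuous_iff_continuousAt.2 fun t => (hG t).continuousAt
  rw [← intervalIntegral.integral_sub ((hFc.lieComm hg).intervalIntegrable a b)
    ((hGc.lieComm hf).intervalIntegrable a b)]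
  refine intervalIntegral.integral_eq_sub_of_hasDerivAt
    (fun t _ => ((hF t).lieComm (hG t)).congr_deriv ?_)
    (Continuous.intervalIntegrable (by exact (hFc.lieComm hg).sub (hGc.lieComm hf)) a b)
  simp only [lieComm]
  abel

end Matrices

theorem stmt8_general (d : ℕ) (S M N : Mat d) :
    ddexp S M N = ddexp S N M := by
  have key := integral_lieComm_sub_integral_lieComm (hasDerivAt_smul_dexp_smul S M)
    (hasDerivAt_smul_dexp_smul S N) (continuous_exp_smul_mul_mul_exp_neg S M)
    (continuous_exp_smul_mul_mul_exp_neg S N) 0 1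
  simp only [one_smul, zero_smul, ← smul_lieComm] at key
  rw [sub_eq_iff_eq_add] at key
  rw [ddexp, ddexp, key]
  simp only [lieComm, sub_self]
  abel

/-- The bilinear operator `ddexp_Σ` is symmetric:
`ddexp_Σ(M,N) = ddexp_Σ(N,M)`. -/
theorem stmt8 (d : ℕ) (hd : 1 ≤ d) (S M N : Mat d) :
    ddexp S M N = ddexp S N M :=
  stmt8_general d S M N
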